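/- arXiv:0808.1813 — 4 statements merged into one kernel-verified Lean document; each statement's English description precedes it below -/
import Mathlib

section
/- Let Δ⁽ᵛ⁾ be a finite simplicial complex on vertex set V whose facets admit a shelling order F₁,…,Fᵣ, and suppose every facet Fᵢ satisfies |Fᵢ| ≤ |V| − 2. Then the reversed order of complements, V∖Fᵣ, …, V∖F₁, is a strong gcd-order: whenever i < j in this reversed order and (V∖Fᵢ) ∩ (V∖Fⱼ) = ∅, there exists k with k ≠ i appearing before position j such that V∖Fₖ ⊆ (V∖Fᵢ) ∪ (V∖Fⱼ). -/
open Finset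

/-- `Δ` is a simplicial complex on the vertex set `V`: every face is a subset
of `V` and the family is closed under taking subsets. -/
def IsComplex {α : Type*} (V : Finset α) (Δ : Set (Finset α)) : Prop :=
  (∀ F ∈ Δ, F ⊆ V) ∧ ∀ F ∈ Δ, ∀ G ⊆ F, G ∈ Δ

/-- `F` is a facet (maximal face) of `Δ`. -/
def IsFacet {α : Type*} (Δ : Set (Finset α)) (F : Finset α) : Prop :=
  F ∈ Δ ∧ ∀ G ∈ Δ, F ⊆ G → F = G

/-- `M` is a minimal non-face of the complex `Δ` on vertex set `V`. -/
def IsMinNonFace {α : Type*} (V : Finset α) (Δ : Set (Finset α)) (M : Finset α) : Prop :=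
  M ⊆ V ∧ M ∉ Δ ∧ ∀ N ⊂ M, N ∈ Δ

/-- The Alexander dual `Δ^∨ = {F ⊆ V : V \ F ∉ Δ}`. -/
def AlexanderDual {α : Type*} [DecidableEq α] (V : Finset α) (Δ : Set (Finset α)) :
    Set (Finset α) :=
  {F | F ⊆ V ∧ V \ F ∉ Δ}

/-- `G` is a face of the intersection complex `⟨F j⟩ ∩ ⟨F 0, …, F (j-1)⟩`. -/
def InInter {α : Type*} {r : ℕ} (F : Fin r → Finset α) (j : Fin r) (G : Finset α) : Prop :=
  G ⊆ F j ∧ ∃ i < j, G ⊆ F i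

/-- `F 0, …, F (r-1)` is a shelling order: for every `j ≥ 1` the intersection
complex `⟨F j⟩ ∩ ⟨F 0, …, F (j-1)⟩` is pure of dimension `dim (F j) - 1`, i.e.
every maximal face of it has cardinality `(F j).card - 1`. -/
def IsShellingOrder {α : Type*} {r : ℕ} (F : Fin r → Finset α) : Prop :=
  ∀ j : Fin r, 0 < j.val → ∀ H, InInter F j H →
    (∀ H', InInter F j H' → H ⊆ H' → H = H') → H.card = (F j).card - 1

/-- `M 0, …, M (r-1)` is a strong gcd-order: whenever `i < j` and
`M i ∩ M j = ∅`, there is `k` with `i < k ≠ j` and `M k ⊆ M i ∪ M j`. -/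
def IsStrongGcdOrder {α : Type*} [DecidableEq α] {r : ℕ} (M : Fin r → Finset α) : Prop :=
  ∀ i j : Fin r, i < j → M i ∩ M j = ∅ →
    ∃ k : Fin r, i < k ∧ k ≠ j ∧ M k ⊆ M i ∪ M j

/-- `F 0, …, F (r-1)` is a weak shelling order on vertex set `V`: whenever
`i < j` and `F i ∪ F j = V`, there is `k ≠ i` with `k < j` and
`F i ∩ F j ⊆ F k`. -/
def IsWeakShellingOrder {α : Type*} [DecidableEq α] (V : Finset α) {r : ℕ}
    (F : Fin r → Finset α) : Prop :=
  ∀ i j : Fin r, i < j → F i ∪ F j = V →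
    ∃ k : Fin r, k ≠ i ∧ k < j ∧ F i ∩ F j ⊆ F k

/-!
Index back in the shelling order: the complements of `F a` and `F b` (`a < b`) are
disjoint exactly when `F a ∪ F b = V`. Extend `F a ∩ F b` to a maximal face `H` of
`⟨F b⟩ ∩ ⟨F 0, …, F (b-1)⟩`; by shellability `|H| = |F b| - 1` and `H ⊆ F c` for some
`c < b`. Then `V \ F c ⊆ V \ (F a ∩ F b)`, the union of the two complements, and `c ≠ a`,
since `|F a|, |F b| ≤ |V| - 2` together with `F a ∪ F b = V` force `|F a ∩ F b| ≤ |F b| - 2`.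
-/

lemma card_inter_add_two_le_of_union_eq {α : Type*} [DecidableEq α] {A B V : Finset α}
    (hAB : A ≠ B) (hunion : A ∪ B = V) (hA : #A ≤ #V - 2) (hB : #B ≤ #V - 2) :
    #(A ∩ B) + 2 ≤ #B := by
  have hsum := card_union_add_card_inter A B
  rw [hunion] at hsum
  have hV : 2 ≤ #V := by
    by_contra! hV
    have hAe : A = ∅ := card_eq_zero.mp (by omega)
    have hBe : B = ∅ := card_eq_zero.mp (by omega)
    exact hAB (hAe.trans hBe.symm)
  omega

lemma setOf_inInter_finite {α : Type*} {r : ℕ} (F : Fin r → Finset α) (j : Fin r) :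
    {H | InInter F j H}.Finite :=
  (F j).powerset.finite_toSet.subset fun _ hH => mem_powerset.mpr hH.1

lemma IsShellingOrder.exists_lt_subset_card_inter {α : Type*} [DecidableEq α] {r : ℕ}
    {F : Fin r → Finset α} (hF : IsShellingOrder F) {j : Fin r} (hj : 0 < j.val) {G : Finset α}
    (hG : InInter F j G) :
    ∃ c < j, G ⊆ F c ∧ #(F j) - 1 ≤ #(F c ∩ F j) := by
  obtain ⟨H, hGH, hHmax⟩ := (setOf_inInter_finite F j).exists_le_maximal hG
  have hcardH : #H = #(F j) - 1 :=
    hF j hj H hHmax.prop fun H' hH' hHH' => hHH'.antisymm (hHmax.le_of_ge hH' hHH')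
  obtain ⟨c, hcj, hHc⟩ := hHmax.prop.2
  exact ⟨c, hcj, hGH.trans hHc, hcardH ▸ card_le_card (subset_inter hHc hHmax.prop.1)⟩

theorem stmt0_general {α : Type*} [DecidableEq α] (V : Finset α) (Δ : Set (Finset α))
    (hΔ : IsComplex V Δ) {r : ℕ} (F : Fin r → Finset α)
    (hfacet : ∀ i, IsFacet Δ (F i)) (hinj : Function.Injective F)
    (hshell : IsShellingOrder F)
    (hcard : ∀ i, (F i).card ≤ V.card - 2) :
    IsStrongGcdOrder (fun p : Fin r => V \ F p.rev) := by
  intro i j hij hdisj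
  have hFV : ∀ k, F k ⊆ V := fun k => hΔ.1 _ (hfacet k).1
  have hji : j.rev < i.rev := Fin.rev_lt_rev.mpr hij
  have hunion : F j.rev ∪ F i.rev = V := (union_subset (hFV _) (hFV _)).antisymm <| by
    rwa [← sdiff_eq_empty_iff_subset, sdiff_union_distrib, inter_comm]
  obtain ⟨c, hci, hsub, hcardc⟩ := hshell.exists_lt_subset_card_inter
    (Nat.zero_lt_of_lt hji) ⟨inter_subset_right, j.rev, hji, inter_subset_left⟩
  have hcj : c ≠ j.rev := by
    rintro rfl
    have := card_inter_add_two_le_of_union_eq (hinj.ne hji.ne) hunion (hcard _) (hcard _)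
    omega
  refine ⟨c.rev, Fin.lt_rev_iff.mpr hci, fun h => hcj (Fin.rev_eq_iff.mp h), ?_⟩
  dsimp only
  rw [Fin.rev_rev, ← sdiff_inter_distrib_right, inter_comm]
  exact sdiff_subset_sdiff subset_rfl hsub

/-- If `F 0, …, F (r-1)` is a shelling order of the facets of a
simplicial complex on `V` with every facet of cardinality at most `|V| - 2`,
then the reversed order of complements `V \ F (r-1), …, V \ F 0` is a strong
gcd-order. -/
theorem stmt0 {α : Type*} [DecidableEq α] (V : Finset α) (Δ : Set (Finset α))
    (hΔ : IsComplex V Δ) {r : ℕ} (F : Fin r → Finset α)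
    (hfacet : ∀ i, IsFacet Δ (F i)) (hinj : Function.Injective F)
    (hall : ∀ G, IsFacet Δ G → ∃ i, F i = G)
    (hshell : IsShellingOrder F)
    (hcard : ∀ i, (F i).card ≤ V.card - 2) :
    IsStrongGcdOrder (fun p : Fin r => V \ F p.rev) :=
  stmt0_general V Δ hΔ F hfacet hinj hshell hcard
end

section
/- If the Alexander dual Δ⁽ᵛ⁾ of a simplicial complex Δ (with no ghost vertices, i.e., every singleton {v} for v ∈ V is a face of Δ) is shellable, then Δ satisfies the strong gcd-condition. -/
/-!
Complementation `F ↦ V \ F` is a bijection between the facets of the Alexander dual and the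
minimal non-faces of `Δ`, turning `F i ∪ F j = V` into `M i ∩ M j = ∅` and `F i ∩ F j ⊆ F k`
into `M k ⊆ M i ∪ M j`. Reversing a shelling order of the dual therefore gives a strong
gcd-order as soon as the shelling order is a weak shelling order. That holds because in a
shelling, if `F i ∪ F j = V` and `F i ∩ F j` were a facet of the intersection complex of `F j`,
it would have codimension one in `F j`, forcing `F i = V \ {x}`; then `{x}` would be a
non-face of `Δ`, which the absence of ghost vertices forbids.
-/

open Finset

section

variable {α : Type*}

theorem InInter.exists_le_maximal {r : ℕ} {F : Fin r → Finset α} {j : Fin r} {G : Finset α}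
    (hG : InInter F j G) :
    ∃ H, G ⊆ H ∧ InInter F j H ∧ ∀ H', InInter F j H' → H ⊆ H' → H = H' := by
  have hfin : {H | InInter F j H}.Finite :=
    (F j).powerset.finite_toSet.subset fun H hH => mem_powerset.2 hH.1
  obtain ⟨H, hGH, hHmem, hHmax⟩ := hfin.exists_le_maximal hG
  exact ⟨H, hGH, hHmem, fun H' hH' hHH' => le_antisymm hHH' (hHmax hH' hHH')⟩

theorem IsShellingOrder.isWeakShellingOrder [DecidableEq α] {V : Finset α} {r : ℕ}
    {F : Fin r → Finset α} (hF : IsShellingOrder F) (hanti : ∀ i j, F i ⊆ F j → i = j)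
    (hcodim : ∀ i, #(V \ F i) ≠ 1) : IsWeakShellingOrder V F := by
  intro i j hij hunion
  obtain ⟨H, hGH, hH, hHmax⟩ :=
    InInter.exists_le_maximal (F := F) ⟨inter_subset_right, i, hij, inter_subset_left⟩
  obtain ⟨k, hkj, hHk⟩ := hH.2
  refine ⟨k, fun hki => ?_, hkj, hGH.trans hHk⟩
  subst hki
  have hHG : H = F k ∩ F j := le_antisymm (subset_inter hHk hH.1) hGH
  have hcard : #H = #(F j) - 1 := hF j (Nat.zero_lt_of_lt hij) H hH hHmax
  -- rules out the truncation `0 - 1 = 0` in `hcard`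
  have hFj : 0 < #(F j) := by
    refine card_pos.2 (nonempty_iff_ne_empty.2 fun hempty => hkj.ne' (hanti j k ?_))
    exact hempty ▸ empty_subset _
  refine absurd ?_ (hcodim k)
  calc #(V \ F k) = #(F j \ F k) := by rw [← hunion, union_sdiff_left]
    _ = #(F j) - #(F k ∩ F j) := card_sdiff
    _ = 1 := by rw [← hHG]; omega

theorem IsWeakShellingOrder.isStrongGcdOrder_sdiff_rev [DecidableEq α] {V : Finset α} {r : ℕ}
    {F : Fin r → Finset α} (hF : IsWeakShellingOrder V F) (hFV : ∀ i, F i ⊆ V) :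
    IsStrongGcdOrder fun a => V \ F a.rev := by
  intro a b hab hdisj
  have hunion : F b.rev ∪ F a.rev = V := by
    refine subset_antisymm (union_subset (hFV _) (hFV _)) ?_
    rwa [← sdiff_eq_empty_iff_subset, sdiff_union_distrib, inter_comm]
  obtain ⟨k, hkb, hka, hsub⟩ := hF b.rev a.rev (Fin.rev_lt_rev.2 hab) hunion
  refine ⟨k.rev, Fin.lt_rev_iff.2 hka, fun h => hkb (Fin.rev_eq_iff.1 h), ?_⟩
  show V \ F k.rev.rev ⊆ V \ F a.rev ∪ V \ F b.rev
  rw [Fin.rev_rev, union_comm, ← sdiff_inter_distrib_right]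
  exact sdiff_subset_sdiff subset_rfl hsub

section AlexanderDual

variable [DecidableEq α] {V : Finset α} {Δ : Set (Finset α)}

theorem IsFacet.isMinNonFace_sdiff {F : Finset α} (hF : IsFacet (AlexanderDual V Δ) F) :
    IsMinNonFace V Δ (V \ F) := by
  refine ⟨sdiff_subset, hF.1.2, fun N hN => ?_⟩
  by_contra hNΔ
  have hNV : N ⊆ V := hN.subset.trans sdiff_subset
  have hFN : F ⊆ V \ N := fun v hv =>
    mem_sdiff.2 ⟨hF.1.1 hv, fun hvN => (mem_sdiff.1 (hN.subset hvN)).2 hv⟩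
  have hdual : V \ N ∈ AlexanderDual V Δ :=
    ⟨sdiff_subset, (Finset.sdiff_sdiff_eq_self hNV).symm ▸ hNΔ⟩
  apply hN.ne
  rw [hF.2 _ hdual hFN, Finset.sdiff_sdiff_eq_self hNV]

theorem IsMinNonFace.isFacet_sdiff {N : Finset α} (hN : IsMinNonFace V Δ N) :
    IsFacet (AlexanderDual V Δ) (V \ N) := by
  refine ⟨⟨sdiff_subset, (Finset.sdiff_sdiff_eq_self hN.1).symm ▸ hN.2.1⟩, fun G hG hNG => ?_⟩
  have hGN : V \ G ⊆ N := sdiff_le_comm.1 hNG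
  obtain rfl : V \ G = N := by
    by_contra hne
    exact hG.2 (hN.2.2 _ (ssubset_of_subset_of_ne hGN hne))
  rw [Finset.sdiff_sdiff_eq_self hG.1]

theorem card_sdiff_ne_one_of_mem_alexanderDual (hghost : ∀ v ∈ V, ({v} : Finset α) ∈ Δ)
    {F : Finset α} (hF : F ∈ AlexanderDual V Δ) : #(V \ F) ≠ 1 := by
  intro hcard
  obtain ⟨x, hx⟩ := card_eq_one.1 hcard
  have hxV : x ∈ V := (mem_sdiff.1 (hx ▸ mem_singleton_self x)).1
  exact hF.2 (hx ▸ hghost x hxV)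

end AlexanderDual

end

theorem stmt1_general {α : Type*} [DecidableEq α] (V : Finset α) (Δ : Set (Finset α))
    (hghost : ∀ v ∈ V, ({v} : Finset α) ∈ Δ)
    (hshellable : ∃ (r : ℕ) (F : Fin r → Finset α),
      Function.Injective F ∧ (∀ i, IsFacet (AlexanderDual V Δ) (F i)) ∧
      (∀ G, IsFacet (AlexanderDual V Δ) G → ∃ i, F i = G) ∧
      IsShellingOrder F) :
    ∃ (r : ℕ) (M : Fin r → Finset α),
      Function.Injective M ∧ (∀ i, IsMinNonFace V Δ (M i)) ∧
      (∀ N, IsMinNonFace V Δ N → ∃ i, M i = N) ∧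
      IsStrongGcdOrder M := by
  obtain ⟨r, F, hFinj, hFfacet, hFsurj, hshell⟩ := hshellable
  have hFV : ∀ i, F i ⊆ V := fun i => (hFfacet i).1.1
  have hweak : IsWeakShellingOrder V F :=
    hshell.isWeakShellingOrder (fun i j h => hFinj ((hFfacet i).2 _ (hFfacet j).1 h))
      fun i => card_sdiff_ne_one_of_mem_alexanderDual hghost (hFfacet i).1
  refine ⟨r, fun a => V \ F a.rev, fun a b hab => ?_, fun a => (hFfacet a.rev).isMinNonFace_sdiff,
    fun N hN => ?_, hweak.isStrongGcdOrder_sdiff_rev hFV⟩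
  · have hab' : V \ (V \ F a.rev) = V \ (V \ F b.rev) := congrArg (V \ ·) hab
    rw [Finset.sdiff_sdiff_eq_self (hFV _), Finset.sdiff_sdiff_eq_self (hFV _)] at hab'
    exact Fin.rev_injective (hFinj hab')
  · obtain ⟨i, hi⟩ := hFsurj _ hN.isFacet_sdiff
    exact ⟨i.rev, by simp only [Fin.rev_rev, hi, Finset.sdiff_sdiff_eq_self hN.1]⟩

/-- If the Alexander dual of `Δ` (a complex without ghost
vertices) is shellable, then `Δ` satisfies the strong gcd-condition. -/
theorem stmt1 {α : Type*} [DecidableEq α] (V : Finset α) (Δ : Set (Finset α))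
    (hΔ : IsComplex V Δ) (hghost : ∀ v ∈ V, ({v} : Finset α) ∈ Δ)
    (hshellable : ∃ (r : ℕ) (F : Fin r → Finset α),
      Function.Injective F ∧ (∀ i, IsFacet (AlexanderDual V Δ) (F i)) ∧
      (∀ G, IsFacet (AlexanderDual V Δ) G → ∃ i, F i = G) ∧
      IsShellingOrder F) :
    ∃ (r : ℕ) (M : Fin r → Finset α),
      Function.Injective M ∧ (∀ i, IsMinNonFace V Δ (M i)) ∧
      (∀ N, IsMinNonFace V Δ N → ∃ i, M i = N) ∧
      IsStrongGcdOrder M :=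
  stmt1_general V Δ hghost hshellable
end

section
/- Let Δ be a simplicial complex on vertex set V with minimal non-faces M₁,…,Mᵣ and let Fᵢ = V∖Mᵢ be the facets of Δ⁽ᵛ⁾. Then the order M₁,…,Mᵣ is a strong gcd-order for Δ if and only if the reversed order Fᵣ, F_{r−1}, …, F₁ is a weak shelling order for Δ⁽ᵛ⁾. -/
open Finset

/-! Complementing in `V` turns `F i ∪ F j = V` into `M i ∩ M j = ∅` and `F i ∩ F j ⊆ F k` into
`M k ⊆ M i ∪ M j`; reversing the order then exchanges the roles of `i` and `j`. -/

namespace Finset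

variable {α : Type*} [DecidableEq α] {V A B C : Finset α}

theorem sdiff_union_sdiff_eq_self_iff (hA : A ⊆ V) : V \ A ∪ V \ B = V ↔ A ∩ B = ∅ := by
  rw [← sdiff_inter_distrib_right, sdiff_eq_self_iff_disjoint, disjoint_iff_inter_eq_empty,
    inter_eq_right.mpr (inter_subset_left.trans hA)]

theorem sdiff_inter_sdiff_subset_sdiff_iff (hA : A ⊆ V) (hB : B ⊆ V) (hC : C ⊆ V) :
    (V \ A) ∩ (V \ B) ⊆ V \ C ↔ C ⊆ A ∪ B := by
  rw [← sdiff_union_distrib, sdiff_subset_sdiff_iff_subset (union_subset hA hB) hC]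

end Finset

open Finset

section

variable {α : Type*} [DecidableEq α] {r : ℕ}

theorem isWeakShellingOrder_sdiff_iff {V : Finset α} {N : Fin r → Finset α} (hN : ∀ i, N i ⊆ V) :
    IsWeakShellingOrder V (fun p => V \ N p) ↔
      ∀ i j : Fin r, i < j → N i ∩ N j = ∅ → ∃ k, k ≠ i ∧ k < j ∧ N k ⊆ N i ∪ N j := by
  simp only [IsWeakShellingOrder, sdiff_union_sdiff_eq_self_iff, sdiff_inter_sdiff_subset_sdiff_iff,
    hN]

theorem isStrongGcdOrder_iff_rev {M : Fin r → Finset α} :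
    IsStrongGcdOrder M ↔ ∀ i j : Fin r, i < j → M i.rev ∩ M j.rev = ∅ →
      ∃ k, k ≠ i ∧ k < j ∧ M k.rev ⊆ M i.rev ∪ M j.rev := by
  constructor
  · intro h i j hij hdisj
    obtain ⟨k, hjk, hki, hk⟩ := h j.rev i.rev (Fin.rev_lt_rev.mpr hij) (by rwa [inter_comm])
    exact ⟨k.rev, by rwa [ne_eq, Fin.rev_eq_iff], Fin.rev_lt_iff.mpr hjk,
      by rwa [union_comm, Fin.rev_rev]⟩
  · intro h i j hij hdisj
    obtain ⟨k, hki, hkj, hk⟩ :=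
      h j.rev i.rev (Fin.rev_lt_rev.mpr hij) (by rwa [inter_comm, Fin.rev_rev, Fin.rev_rev])
    exact ⟨k.rev, Fin.lt_rev_iff.mpr hkj, by rwa [ne_eq, Fin.rev_eq_iff], by simpa [union_comm] using hk⟩

end

theorem stmt3_general {α : Type*} [DecidableEq α] (V : Finset α) (Δ : Set (Finset α))
    {r : ℕ} (M : Fin r → Finset α)
    (hmin : ∀ i, IsMinNonFace V Δ (M i)) :
    IsStrongGcdOrder M ↔
      IsWeakShellingOrder V (fun p : Fin r => V \ M p.rev) :=
  isStrongGcdOrder_iff_rev.trans (isWeakShellingOrder_sdiff_iff fun i => (hmin i.rev).1).symm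

/-- `M 0, …, M (r-1)` is a strong gcd-order for `Δ` iff the
reversed order of the facets `F i = V \ M i` of the Alexander dual is a weak
shelling order. -/
theorem stmt3 {α : Type*} [DecidableEq α] (V : Finset α) (Δ : Set (Finset α))
    (hΔ : IsComplex V Δ) {r : ℕ} (M : Fin r → Finset α)
    (hinj : Function.Injective M) (hmin : ∀ i, IsMinNonFace V Δ (M i))
    (hall : ∀ N, IsMinNonFace V Δ N → ∃ i, M i = N) :
    IsStrongGcdOrder M ↔
      IsWeakShellingOrder V (fun p : Fin r => V \ M p.rev) :=
  stmt3_general V Δ M hmin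
end

section
/- Let Δ₃ be the simplicial complex on vertex set {0,1,…,9} whose minimal non-faces are M₁={0,1,5,6}, M₂={1,2,6,7}, M₃={2,3,7,8}, M₄={3,4,8,9}, M₅={0,4,5,9}, M₆={5,6,7,8,9}. Then no linear order of these six sets is a strong gcd-order; i.e., Δ₃ does not satisfy the strong gcd-condition. -/
/-!
`M₁, …, M₅` (`mnf14 0, …, mnf14 4`) form a 5-cycle: two of them are disjoint exactly when
they are not cyclically adjacent, and the union of the two neighbours of `Mᵥ` contains no minimal non-face other
than those two and `Mᵥ`. Take `Mᵥ` to be the first of `M₁, …, M₅` in a given order. Its two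
neighbours come later and are disjoint, so a strong gcd-order needs some `Mₖ` after the
earlier of them inside their union; the only candidate is `Mᵥ`, which comes before both.
-/

open Finset

def mnf14 : Fin 6 → Finset ℕ :=
  ![{0,1,5,6}, {1,2,6,7}, {2,3,7,8}, {3,4,8,9}, {0,4,5,9}, {5,6,7,8,9}]

theorem IsStrongGcdOrder.exists_between {α : Type*} [DecidableEq α] {r : ℕ}
    {M : Fin r → Finset α} (h : IsStrongGcdOrder M) {i j : Fin r} (hij : i ≠ j)
    (hd : M i ∩ M j = ∅) : ∃ k, k ≠ i ∧ k ≠ j ∧ min i j < k ∧ M k ⊆ M i ∪ M j := by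
  rcases hij.lt_or_gt with hlt | hgt
  · obtain ⟨k, hik, hkj, hk⟩ := h i j hlt hd
    exact ⟨k, hik.ne', hkj, by simpa [hlt.le] using hik, hk⟩
  · obtain ⟨k, hjk, hki, hk⟩ := h j i hgt (by rwa [inter_comm])
    exact ⟨k, hki, hjk.ne', by simpa [hgt.le] using hjk, by rwa [union_comm]⟩

theorem IsStrongGcdOrder.exists_after_of_perm {α : Type*} [DecidableEq α] {r : ℕ}
    {M : Fin r → Finset α} {σ : Equiv.Perm (Fin r)} (h : IsStrongGcdOrder (M ∘ σ))
    {a b : Fin r} (hab : a ≠ b) (hd : M a ∩ M b = ∅) :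
    ∃ c, c ≠ a ∧ c ≠ b ∧ min (σ.symm a) (σ.symm b) < σ.symm c ∧ M c ⊆ M a ∪ M b := by
  obtain ⟨k, hka, hkb, hlt, hk⟩ :=
    h.exists_between (σ.symm.injective.ne hab) (by simpa using hd)
  refine ⟨σ k, ?_, ?_, by simpa using hlt, by simpa using hk⟩
  · rintro rfl; simp at hka
  · rintro rfl; simp at hkb

theorem mnf14_neighbours (v : Fin 6) (hv : v ≠ 5) :
    ∃ a ≠ 5, ∃ b ≠ 5, a ≠ b ∧ mnf14 a ∩ mnf14 b = ∅ ∧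
      ∀ c, mnf14 c ⊆ mnf14 a ∪ mnf14 b → c = a ∨ c = b ∨ c = v := by
  revert v; decide

/-- no linear order of the six minimal non-faces of `Δ₃` is a
strong gcd-order; i.e. `Δ₃` does not satisfy the strong gcd-condition. -/
theorem stmt14 :
    ∀ σ : Equiv.Perm (Fin 6), ¬ IsStrongGcdOrder (mnf14 ∘ σ) := by
  intro σ h
  obtain ⟨v, hv, hmin⟩ := exists_min_image (univ.erase 5) σ.symm ⟨0, by decide⟩
  obtain ⟨a, ha, b, hb, hab, hd, honly⟩ := mnf14_neighbours v (ne_of_mem_erase hv)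
  obtain ⟨c, hca, hcb, hlt, hc⟩ := h.exists_after_of_perm hab hd
  obtain rfl : c = v := ((honly c hc).resolve_left hca).resolve_left hcb
  exact hlt.not_ge (le_min (hmin a (mem_erase.2 ⟨ha, mem_univ a⟩))
    (hmin b (mem_erase.2 ⟨hb, mem_univ b⟩)))
end
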